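/- For any triangle, the blue, red, and green values of Archimedes' function on its colored quadrances satisfy A(Q1ᵇ,Q2ᵇ,Q3ᵇ) = −A(Q1ʳ,Q2ʳ,Q3ʳ) = −A(Q1ᵍ,Q2ᵍ,Q3ᵍ), i.e., the blue value equals minus the red value and minus the green value. -/

import Mathlib

/-!
All three colours are instances of the quadratic form `a x² + 2 b x y + c y²` applied to difference
vectors. For any such form, Archimedes' function of the three quadrances of a triangle equals
`4 (a c - b²) D²`, where `D` is the determinant of two side vectors (twice the signed area).
The discriminant `a c - b²` is `1` for blue and `-1` for red and green.
-/

/-- Blue quadrance between two points. -/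
def Qb {F : Type*} [Field F] (X Y : F × F) : F :=
  (Y.1 - X.1) ^ 2 + (Y.2 - X.2) ^ 2

/-- Red quadrance between two points. -/
def Qr {F : Type*} [Field F] (X Y : F × F) : F :=
  (Y.1 - X.1) ^ 2 - (Y.2 - X.2) ^ 2

/-- Green quadrance between two points. -/
def Qg {F : Type*} [Field F] (X Y : F × F) : F :=
  2 * (Y.1 - X.1) * (Y.2 - X.2)

/-- Archimedes' function. -/
def archimedes {F : Type*} [Field F] (Q1 Q2 Q3 : F) : F :=
  (Q1 + Q2 + Q3) ^ 2 - 2 * (Q1 ^ 2 + Q2 ^ 2 + Q3 ^ 2)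

section

variable {F : Type*} [Field F]

def quadrance (a b c : F) (X Y : F × F) : F :=
  a * (Y.1 - X.1) ^ 2 + 2 * b * (Y.1 - X.1) * (Y.2 - X.2) + c * (Y.2 - X.2) ^ 2

def cross (A1 A2 A3 : F × F) : F :=
  (A2.1 - A1.1) * (A3.2 - A1.2) - (A3.1 - A1.1) * (A2.2 - A1.2)

theorem archimedes_quadrance (a b c : F) (A1 A2 A3 : F × F) :
    archimedes (quadrance a b c A2 A3) (quadrance a b c A1 A3) (quadrance a b c A1 A2)
      = 4 * (a * c - b ^ 2) * cross A1 A2 A3 ^ 2 := by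
  simp only [archimedes, quadrance, cross]
  ring

theorem Qb_eq_quadrance : (Qb : F × F → F × F → F) = quadrance 1 0 1 := by
  funext X Y
  simp only [Qb, quadrance]
  ring

theorem Qr_eq_quadrance : (Qr : F × F → F × F → F) = quadrance 1 0 (-1) := by
  funext X Y
  simp only [Qr, quadrance]
  ring

theorem Qg_eq_quadrance : (Qg : F × F → F × F → F) = quadrance 0 1 0 := by
  funext X Y
  simp only [Qg, quadrance]
  ring

end

/-- The blue value of Archimedes' function on the quadrances of a triangle
equals minus the red value and minus the green value. -/
theorem archimedes_three_colours {F : Type*} [Field F] (A1 A2 A3 : F × F) :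
    archimedes (Qb A2 A3) (Qb A1 A3) (Qb A1 A2)
        = -archimedes (Qr A2 A3) (Qr A1 A3) (Qr A1 A2)
      ∧ archimedes (Qb A2 A3) (Qb A1 A3) (Qb A1 A2)
        = -archimedes (Qg A2 A3) (Qg A1 A3) (Qg A1 A2) := by
  simp only [Qb_eq_quadrance, Qr_eq_quadrance, Qg_eq_quadrance, archimedes_quadrance]
  constructor <;> ring
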